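/- For monotone f : {-1,1}^I → {-1,1} and a single bit x ∈ I with W ⊆ I∖{x}, the exact identity ∑_{S : x∈S, S∩W=∅} f̂(S)² = E[λ(x,W)²] holds, where λ(x,W) = P[x is pivotal | F_{W^c}]. -/

import Mathlib

open Finset

variable {I : Type*} [Fintype I] [DecidableEq I]

/-- Expectation with respect to the uniform probability measure on `{-1,1}^I ≅ (I → Bool)`. -/
noncomputable def expec (f : (I → Bool) → ℝ) : ℝ :=
  (∑ ω : I → Bool, f ω) / (Fintype.card (I → Bool) : ℝ)

/-- The value `±1` of a bit. -/
noncomputable def sgn (b : Bool) : ℝ := if b then 1 else -1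

/-- The Walsh function `χ_S(ω) = ∏_{i ∈ S} ω_i`. -/
noncomputable def chi (S : Finset I) (ω : I → Bool) : ℝ := ∏ i ∈ S, sgn (ω i)

/-- The Fourier coefficient `f̂(S) = E[f ⬝ χ_S]`. -/
noncomputable def fhat (f : (I → Bool) → ℝ) (S : Finset I) : ℝ :=
  expec (fun ω => f ω * chi S ω)

/-- The conditional expectation `E[g | F_A]` given the coordinates in `A`. -/
noncomputable def condE (g : (I → Bool) → ℝ) (A : Finset I) (ω : I → Bool) : ℝ :=
  expec (fun z => g (fun i => if i ∈ A then ω i else z i))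

open Classical in
/-- The indicator of the event that the bit `x` is pivotal for `f`. -/
noncomputable def pivIndBit (f : (I → Bool) → ℝ) (x : I) (ω : I → Bool) : ℝ :=
  if f (Function.update ω x (!ω x)) ≠ f ω then 1 else 0

/-!
For monotone `±1`-valued `f`, the pivotal indicator of `x` is the discrete derivative
`ω_x (f ω - f ω^x) / 2`, whose Walsh coefficients are `f̂(S ∪ {x})` for `x ∉ S` and `0` for
`x ∈ S`. Conditioning on the coordinates in `A = I ∖ W` keeps exactly the coefficients with
`S ⊆ A`: flipping a coordinate of `S` outside `A` leaves the conditional expectation unchanged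
but negates `χ_S`. Parseval turns `E[λ(x,W)²]` into the sum of `f̂(S ∪ {x})²` over `x ∉ S ⊆ A`, which is the
left-hand side after the substitution `S ↦ S ∪ {x}`.
-/

lemma sgn_mul_self (b : Bool) : sgn b * sgn b = 1 := by
  cases b <;> norm_num [sgn]

lemma sgn_not (b : Bool) : sgn (!b) = -sgn b := by
  cases b <;> simp [sgn]

lemma abs_sgn (b : Bool) : |sgn b| = 1 := by
  cases b <;> simp [sgn]

lemma ite_ne_eq_abs_sub_div_two {a b : ℝ} [Decidable (a ≠ b)] (ha : a = 1 ∨ a = -1)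
    (hb : b = 1 ∨ b = -1) :
    (if a ≠ b then 1 else 0 : ℝ) = |a - b| / 2 := by
  rcases ha with rfl | rfl <;> rcases hb with rfl | rfl <;> norm_num

lemma sum_ite_mem_eq_sum_ite_notMem_insert {α : Type*} [Fintype α] [DecidableEq α]
    {M : Type*} [AddCommMonoid M] (x : α) (p : Finset α → Prop) [DecidablePred p]
    (F : Finset α → M) :
    (∑ S : Finset α, if x ∈ S ∧ p S then F S else 0)
      = ∑ S : Finset α, if x ∉ S ∧ p (insert x S) then F (insert x S) else 0 := by
  rw [← sum_filter, ← sum_filter]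
  refine sum_nbij' (fun S => S.erase x) (insert x) ?_ ?_ ?_ ?_ ?_ <;>
    simp +contextual [insert_erase]

section

omit [Fintype I]

def flipBit (x : I) : Equiv.Perm (I → Bool) :=
  Function.Involutive.toPerm (fun ω => Function.update ω x (!ω x)) fun ω => by simp

lemma flipBit_apply (x : I) (ω : I → Bool) : flipBit x ω = Function.update ω x (!ω x) :=
  rfl

lemma flipBit_flipBit (x : I) (ω : I → Bool) : flipBit x (flipBit x ω) = ω := by
  simp [flipBit_apply]

lemma flipBit_apply_self (x : I) (ω : I → Bool) : flipBit x ω x = !ω x := by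
  simp [flipBit_apply]

lemma flipBit_apply_of_ne {x i : I} (h : i ≠ x) (ω : I → Bool) : flipBit x ω i = ω i := by
  simp [flipBit_apply, h]

lemma chi_insert {x : I} {S : Finset I} (hx : x ∉ S) (ω : I → Bool) :
    chi (insert x S) ω = sgn (ω x) * chi S ω :=
  prod_insert hx

lemma chi_flipBit_of_notMem {x : I} {S : Finset I} (hx : x ∉ S) (ω : I → Bool) :
    chi S (flipBit x ω) = chi S ω :=
  prod_congr rfl fun i hi => by rw [flipBit_apply_of_ne (ne_of_mem_of_not_mem hi hx)]

lemma chi_flipBit_of_mem {x : I} {S : Finset I} (hx : x ∈ S) (ω : I → Bool) :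
    chi S (flipBit x ω) = -chi S ω := by
  rw [← insert_erase hx, chi_insert (notMem_erase x S), chi_insert (notMem_erase x S),
    chi_flipBit_of_notMem (notMem_erase x S), flipBit_apply_self, sgn_not, neg_mul]

lemma pivIndBit_flipBit (f : (I → Bool) → ℝ) (x : I) (ω : I → Bool) :
    pivIndBit f x (flipBit x ω) = pivIndBit f x ω := by
  simp only [pivIndBit, ← flipBit_apply, flipBit_flipBit, ne_comm]

lemma sgn_mul_sub_flipBit_nonneg {f : (I → Bool) → ℝ} (hf : Monotone f) (x : I) (ω : I → Bool) :
    0 ≤ sgn (ω x) * (f ω - f (flipBit x ω)) := by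
  cases hb : ω x
  · have hle : ω ≤ flipBit x ω := le_update_self_iff.mpr (by simp [hb])
    norm_num [sgn]
    linarith [hf hle]
  · have hle : flipBit x ω ≤ ω := update_le_self_iff.mpr (by simp [hb])
    norm_num [sgn]
    linarith [hf hle]

lemma pivIndBit_eq_of_monotone {f : (I → Bool) → ℝ} (hpm : ∀ ω, f ω = 1 ∨ f ω = -1)
    (hf : Monotone f) (x : I) (ω : I → Bool) :
    pivIndBit f x ω = sgn (ω x) * (f ω - f (flipBit x ω)) / 2 := by
  rw [pivIndBit, ← flipBit_apply, ite_ne_eq_abs_sub_div_two (hpm _) (hpm _), abs_sub_comm,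
    ← one_mul |_|, ← abs_sgn (ω x), ← abs_mul, abs_of_nonneg (sgn_mul_sub_flipBit_nonneg hf x ω)]

lemma piecewise_flipBit_of_notMem {x : I} {A : Finset I} (hx : x ∉ A) (ω z : I → Bool) :
    A.piecewise (flipBit x ω) z = A.piecewise ω z :=
  piecewise_congr A (fun _ hi => flipBit_apply_of_ne (ne_of_mem_of_not_mem hi hx) ω) fun _ _ => rfl

def swapOutside (A : Finset I) : Equiv.Perm ((I → Bool) × (I → Bool)) :=
  Function.Involutive.toPerm (fun p => (A.piecewise p.1 p.2, A.piecewise p.2 p.1)) fun p => by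
    ext i <;> by_cases hi : i ∈ A <;> simp [hi]

lemma swapOutside_apply (A : Finset I) (p : (I → Bool) × (I → Bool)) :
    swapOutside A p = (A.piecewise p.1 p.2, A.piecewise p.2 p.1) :=
  rfl

end

lemma expec_comp_perm (e : Equiv.Perm (I → Bool)) (F : (I → Bool) → ℝ) :
    expec (fun ω => F (e ω)) = expec F := by
  rw [expec, expec, Equiv.sum_comp e F]

lemma sum_chi_mul_chi (ω z : I → Bool) :
    ∑ S : Finset I, chi S ω * chi S z = if ω = z then (Fintype.card (I → Bool) : ℝ) else 0 := by
  have hprod : ∑ S : Finset I, chi S ω * chi S z = ∏ i, (sgn (ω i) * sgn (z i) + 1) := by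
    simp only [Fintype.prod_add, chi, ← prod_mul_distrib, prod_const_one, mul_one]
  rw [hprod]
  split_ifs with h
  · subst h
    simp only [sgn_mul_self, prod_const, card_univ, Fintype.card_fun, Fintype.card_bool]
    norm_num
  · obtain ⟨i, hi⟩ := Function.ne_iff.mp h
    refine prod_eq_zero (mem_univ i) ?_
    revert hi
    cases ω i <;> cases z i <;> simp [sgn]

lemma sum_fhat_mul_chi (g : (I → Bool) → ℝ) (ω : I → Bool) :
    ∑ S : Finset I, fhat g S * chi S ω = g ω := by
  have hN : (Fintype.card (I → Bool) : ℝ) ≠ 0 := by positivity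
  calc ∑ S : Finset I, fhat g S * chi S ω
      = (∑ z, g z * ∑ S : Finset I, chi S z * chi S ω) / Fintype.card (I → Bool) := by
        simp only [fhat, expec, sum_div, sum_mul, mul_sum]
        rw [sum_comm]
        exact sum_congr rfl fun _ _ => sum_congr rfl fun _ _ => by ring
    _ = g ω := by
        simp only [sum_chi_mul_chi, mul_ite, mul_zero, sum_ite_eq', mem_univ, if_true]
        field_simp

lemma expec_mul_eq_sum_fhat_mul (g h : (I → Bool) → ℝ) :
    expec (fun ω => g ω * h ω) = ∑ S : Finset I, fhat g S * fhat h S := by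
  calc expec (fun ω => g ω * h ω)
      = (∑ ω, ∑ S : Finset I, fhat g S * chi S ω * h ω) / Fintype.card (I → Bool) := by
        simp only [expec, ← sum_mul, sum_fhat_mul_chi]
    _ = ∑ S : Finset I, fhat g S * fhat h S := by
        simp only [sum_div]
        rw [sum_comm]
        refine sum_congr rfl fun S _ => ?_
        simp only [fhat, expec, mul_sum, sum_div]
        exact sum_congr rfl fun _ _ => by ring

lemma expec_sq_eq_sum_fhat_sq (g : (I → Bool) → ℝ) :
    expec (fun ω => g ω ^ 2) = ∑ S : Finset I, fhat g S ^ 2 := by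
  simpa only [sq] using expec_mul_eq_sum_fhat_mul g g

lemma sum_eq_zero_of_flipBit_antisymm (x : I) {F : (I → Bool) → ℝ}
    (hF : ∀ ω, F (flipBit x ω) = -F ω) : ∑ ω, F ω = 0 := by
  have h := Equiv.sum_comp (flipBit x) F
  simp only [hF, sum_neg_distrib] at h
  linarith

lemma fhat_eq_zero_of_flipBit_invariant {g : (I → Bool) → ℝ} {x : I} {S : Finset I}
    (hg : ∀ ω, g (flipBit x ω) = g ω) (hx : x ∈ S) : fhat g S = 0 := by
  rw [fhat, expec, sum_eq_zero_of_flipBit_antisymm x fun ω => ?_, zero_div]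
  rw [hg, chi_flipBit_of_mem hx, mul_neg]

lemma condE_eq_expec_piecewise (g : (I → Bool) → ℝ) (A : Finset I) (ω : I → Bool) :
    condE g A ω = expec (fun z => g (A.piecewise ω z)) :=
  rfl

lemma sum_sum_piecewise (A : Finset I) (F : (I → Bool) → ℝ) :
    ∑ ω, ∑ z, F (A.piecewise ω z) = Fintype.card (I → Bool) * ∑ ω, F ω := by
  have h := Equiv.sum_comp (swapOutside A) fun p => F p.1
  simp only [swapOutside_apply, Fintype.sum_prod_type, sum_const, card_univ, nsmul_eq_mul] at h
  rw [h, mul_sum]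

lemma expec_condE_mul {h : (I → Bool) → ℝ} (g : (I → Bool) → ℝ) (A : Finset I)
    (hh : ∀ ω z, h (A.piecewise ω z) = h ω) :
    expec (fun ω => condE g A ω * h ω) = expec (fun ω => g ω * h ω) := by
  have hN : (Fintype.card (I → Bool) : ℝ) ≠ 0 := by positivity
  calc expec (fun ω => condE g A ω * h ω)
      = (∑ ω, ∑ z, g (A.piecewise ω z) * h (A.piecewise ω z))
          / Fintype.card (I → Bool) / Fintype.card (I → Bool) := by
        simp only [condE_eq_expec_piecewise, expec, hh, sum_div, sum_mul]
        exact sum_congr rfl fun _ _ => sum_congr rfl fun _ _ => by ring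
    _ = expec (fun ω => g ω * h ω) := by
        rw [sum_sum_piecewise A fun ω => g ω * h ω, expec]
        field_simp

lemma fhat_condE (g : (I → Bool) → ℝ) (A S : Finset I) :
    fhat (condE g A) S = if S ⊆ A then fhat g S else 0 := by
  split_ifs with hS
  · refine expec_condE_mul g A fun ω z => prod_congr rfl fun i hi => ?_
    rw [piecewise_eq_of_mem _ _ _ (hS hi)]
  · obtain ⟨i, hiS, hiA⟩ := not_subset.mp hS
    refine fhat_eq_zero_of_flipBit_invariant (fun ω => ?_) hiS
    simp only [condE_eq_expec_piecewise, piecewise_flipBit_of_notMem hiA]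

lemma fhat_pivIndBit {f : (I → Bool) → ℝ} (hpm : ∀ ω, f ω = 1 ∨ f ω = -1) (hf : Monotone f)
    (x : I) (S : Finset I) :
    fhat (pivIndBit f x) S = if x ∈ S then 0 else fhat f (insert x S) := by
  split_ifs with hxS
  · exact fhat_eq_zero_of_flipBit_invariant (pivIndBit_flipBit f x) hxS
  have hflip : expec (fun ω => f (flipBit x ω) * chi (insert x S) ω) = -fhat f (insert x S) := by
    rw [← expec_comp_perm (flipBit x), fhat, expec, expec, ← neg_div, ← sum_neg_distrib]
    refine congrArg (· / _) (sum_congr rfl fun ω _ => ?_)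
    rw [flipBit_flipBit, chi_insert hxS, chi_insert hxS, flipBit_apply_self, sgn_not,
      chi_flipBit_of_notMem hxS]
    ring
  calc fhat (pivIndBit f x) S
      = (fhat f (insert x S) - expec (fun ω => f (flipBit x ω) * chi (insert x S) ω)) / 2 := by
        simp only [fhat, expec, pivIndBit_eq_of_monotone hpm hf, chi_insert hxS, ← sub_div,
          ← sum_sub_distrib, div_div, sum_div]
        exact sum_congr rfl fun _ _ => by ring
    _ = fhat f (insert x S) := by rw [hflip]; ring

/-- For monotone `±1`-valued `f`, a bit `x` and `W ⊆ I∖{x}`, the exact identity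
`P[x ∈ 𝒮, 𝒮 ∩ W = ∅] = E[λ(x,W)²]` holds, where
`λ(x,W) = P[x is pivotal | F_{W^c}]`. -/
theorem spectral_bit_identity (f : (I → Bool) → ℝ)
    (hpm : ∀ ω, f ω = 1 ∨ f ω = -1)
    (hmono : ∀ ω ω' : I → Bool, (∀ i, ω i ≤ ω' i) → f ω ≤ f ω')
    (x : I) (W : Finset I) (hx : x ∉ W) :
    (∑ S : Finset I, if x ∈ S ∧ S ∩ W = ∅ then fhat f S ^ 2 else 0)
      = expec (fun ω => condE (pivIndBit f x) ((univ : Finset I) \ W) ω ^ 2) := by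
  have hdisj : ∀ S : Finset I, insert x S ∩ W = ∅ ↔ S ⊆ univ \ W := fun S => by
    simp [← disjoint_iff_inter_eq_empty, subset_sdiff, hx]
  rw [sum_ite_mem_eq_sum_ite_notMem_insert, expec_sq_eq_sum_fhat_sq]
  refine sum_congr rfl fun S _ => ?_
  rw [fhat_condE, fhat_pivIndBit hpm (fun ω ω' h => hmono ω ω' h)]
  by_cases hxS : x ∈ S <;> by_cases hSW : S ⊆ univ \ W <;> simp [hxS, hSW, hdisj]
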